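/- Let k be a field and r ≥ 1. The k-algebra homomorphism from k[u_2,u_3,…,u_{2r+1}] to the polynomial ring k[v_1,…,v_{2r}] (with generators graded so that deg v_i = i) defined by u_{2a} ↦ v_{2a} (1 ≤ a ≤ r), u_{2a+1} ↦ v_{2a+1} + v_1 v_{2a} (1 ≤ a ≤ r−1), and u_{2r+1} ↦ v_1 v_{2r}, is injective. -/

import Mathlib

open MvPolynomial

/-- If the family `f` of polynomials, substituted into a suitable family `w` living in a
`k`-algebra `A`, yields `φ ∘ X ∘ σ` for an injective algebra map `φ` and an injective map `σ`
of the variables, then `aeval f` is injective. -/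
theorem aeval_injective_of_retraction {k : Type*} [CommSemiring k] {ι : Type*} {A : Type*}
    [CommSemiring A] [Algebra k A]
    (f : ι → MvPolynomial ι k) (w : ι → A) (σ : ι → ι) (hσ : Function.Injective σ)
    (φ : MvPolynomial ι k →ₐ[k] A) (hφ : Function.Injective φ)
    (hkey : ∀ i, aeval w (f i) = φ (X (σ i))) :
    Function.Injective (aeval f : MvPolynomial ι k →ₐ[k] MvPolynomial ι k) := by
  have hcomp : ∀ T, aeval w (aeval f T) = φ (rename σ T) := by
    intro T
    induction T using MvPolynomial.induction_on with
    | C a => simp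
    | add p q hp hq => simp only [map_add, hp, hq]
    | mul_X p i hp => simp only [map_mul, aeval_X, rename_X, hp, hkey]
  intro P Q h
  apply rename_injective σ hσ
  apply hφ
  rw [← hcomp P, ← hcomp Q, h]

namespace Statement7Aux

variable (k : Type*) [Field k] (r : ℕ)

/-- The distinguished variable `v_{2r}`. -/
noncomputable def p (hr : 1 ≤ r) : MvPolynomial (Fin (2 * r)) k :=
  X ⟨2 * r - 1, Nat.sub_lt (Nat.mul_pos two_pos hr) one_pos⟩

/-- The inverse of `v_{2r}` in the localization. -/
noncomputable def t (hr : 1 ≤ r) : Localization.Away (p k r hr) :=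
  IsLocalization.Away.invSelf (p k r hr)

/-- The "inverse" substitution, with values in the localization away from `v_{2r}`. -/
noncomputable def w (hr : 1 ≤ r) : Fin (2 * r) → Localization.Away (p k r hr) :=
  fun j =>
    if (j : ℕ) % 2 = 1 then
      algebraMap (MvPolynomial (Fin (2 * r)) k) _ (X j)
    else if (j : ℕ) = 0 then
      algebraMap (MvPolynomial (Fin (2 * r)) k) _ (X j) * t k r hr
    else
      algebraMap (MvPolynomial (Fin (2 * r)) k) _ (X j) -
        algebraMap (MvPolynomial (Fin (2 * r)) k) _ (X (⟨0, Nat.mul_pos two_pos hr⟩ : Fin (2 * r))) *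
          t k r hr *
          algebraMap (MvPolynomial (Fin (2 * r)) k) _
            (X (⟨(j : ℕ) - 1, by have := j.isLt; omega⟩ : Fin (2 * r)))

theorem w_odd (hr : 1 ≤ r) (n : ℕ) (h : n < 2 * r) (h1 : n % 2 = 1) :
    w k r hr ⟨n, h⟩ = algebraMap (MvPolynomial (Fin (2 * r)) k) _ (X ⟨n, h⟩) := by
  unfold w
  rw [if_pos h1]

theorem w_zero (hr : 1 ≤ r) (h : 0 < 2 * r) :
    w k r hr ⟨0, h⟩ =
      algebraMap (MvPolynomial (Fin (2 * r)) k) _ (X ⟨0, h⟩) * t k r hr := by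
  unfold w
  simp only [Fin.val_mk]
  rw [if_neg (by omega : ¬ (0 : ℕ) % 2 = 1)]
  simp

theorem w_even (hr : 1 ≤ r) (n : ℕ) (h : n < 2 * r) (h2 : n % 2 = 0) (h0 : n ≠ 0) :
    w k r hr ⟨n, h⟩ =
      algebraMap (MvPolynomial (Fin (2 * r)) k) _ (X ⟨n, h⟩) -
        algebraMap (MvPolynomial (Fin (2 * r)) k) _ (X (⟨0, Nat.mul_pos two_pos hr⟩ : Fin (2 * r))) *
          t k r hr *
          algebraMap (MvPolynomial (Fin (2 * r)) k) _
            (X (⟨n - 1, by omega⟩ : Fin (2 * r))) := by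
  unfold w
  simp only [Fin.val_mk]
  rw [if_neg (by omega : ¬ n % 2 = 1), if_neg h0]

/-- The cyclic permutation of the variables. -/
def σ : Fin (2 * r) → Fin (2 * r) := fun i =>
  if h : (i : ℕ) + 1 = 2 * r then ⟨0, by omega⟩
  else ⟨(i : ℕ) + 1, by have := i.isLt; omega⟩

theorem σ_injective : Function.Injective (σ r) := by
  intro a b hab
  have ha := a.isLt; have hb := b.isLt
  unfold σ at hab
  apply Fin.ext
  split_ifs at hab <;> simp only [Fin.mk.injEq] at hab <;> omega

theorem σ_last (hr : 1 ≤ r) (i : Fin (2 * r)) (h : (i : ℕ) + 1 = 2 * r) :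
    σ r i = ⟨0, Nat.mul_pos two_pos hr⟩ := dif_pos h

theorem σ_not_last (i : Fin (2 * r)) (h : ¬ (i : ℕ) + 1 = 2 * r) :
    σ r i = ⟨(i : ℕ) + 1, by have := i.isLt; omega⟩ := dif_neg h

end Statement7Aux

/-- Let `k` be a field and `r ≥ 1`. The `k`-algebra homomorphism
`k[u₂,u₃,…,u_{2r+1}] → k[v₁,…,v_{2r}]` defined by `u_{2a} ↦ v_{2a}` (`1 ≤ a ≤ r`),
`u_{2a+1} ↦ v_{2a+1} + v₁ v_{2a}` (`1 ≤ a ≤ r−1`), and `u_{2r+1} ↦ v₁ v_{2r}`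
is injective. Here the variable `i : Fin (2r)` of the source represents `u_{i+2}`
and the variable `i : Fin (2r)` of the target represents `v_{i+1}`. -/
theorem u_to_v_substitution_injective
    (k : Type*) [Field k] (r : ℕ) (hr : 1 ≤ r) :
    Function.Injective
      (MvPolynomial.aeval
        (fun i : Fin (2 * r) =>
          if h1 : (i : ℕ) + 2 = 2 * r + 1 then
            X (⟨0, by omega⟩ : Fin (2 * r)) * X (⟨2 * r - 1, by omega⟩ : Fin (2 * r))
          else if ((i : ℕ) + 2) % 2 = 0 then
            X (⟨(i : ℕ) + 1, by have := i.isLt; omega⟩ : Fin (2 * r))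
          else
            X (⟨(i : ℕ) + 1, by have := i.isLt; omega⟩ : Fin (2 * r)) +
              X (⟨0, by omega⟩ : Fin (2 * r)) * X (⟨(i : ℕ), by omega⟩ : Fin (2 * r))) :
        MvPolynomial (Fin (2 * r)) k →ₐ[k] MvPolynomial (Fin (2 * r)) k) := by
  classical
  open Statement7Aux in
  have hmul : algebraMap (MvPolynomial (Fin (2 * r)) k) (Localization.Away (p k r hr))
      (p k r hr) * t k r hr = 1 := IsLocalization.Away.mul_invSelf (p k r hr)
  have hpne : p k r hr ≠ 0 := MvPolynomial.X_ne_zero _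
  have halg : Function.Injective
      (algebraMap (MvPolynomial (Fin (2 * r)) k) (Localization.Away (p k r hr))) := by
    apply IsLocalization.injective _ (M := Submonoid.powers (p k r hr))
    exact (Submonoid.powers_le).mpr (mem_nonZeroDivisors_of_ne_zero hpne)
  apply aeval_injective_of_retraction _ (w k r hr) (σ r) (σ_injective r)
    (IsScalarTower.toAlgHom k (MvPolynomial (Fin (2 * r)) k) (Localization.Away (p k r hr)))
    halg
  intro i
  have hi := i.isLt
  by_cases h1 : (i : ℕ) + 2 = 2 * r + 1
  · rw [dif_pos h1, σ_last r hr i (by omega)]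
    rw [map_mul, aeval_X, aeval_X]
    have hz := w_zero k r hr (by omega)
    have ho := w_odd k r hr (2 * r - 1) (by omega) (by omega)
    rw [hz, ho]
    have hB : algebraMap (MvPolynomial (Fin (2 * r)) k) (Localization.Away (p k r hr))
        (X (⟨2 * r - 1, by omega⟩ : Fin (2 * r))) * t k r hr = 1 := hmul
    rw [mul_assoc, mul_comm (t k r hr), hB, mul_one]
    rfl
  · rw [dif_neg h1]
    by_cases h2 : ((i : ℕ) + 2) % 2 = 0
    · rw [if_pos h2, σ_not_last r i (by omega), aeval_X,
        w_odd k r hr ((i : ℕ) + 1) (by omega) (by omega)]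
      rfl
    · rw [if_neg h2, σ_not_last r i (by omega)]
      have hodd : (i : ℕ) % 2 = 1 := by omega
      rw [map_add, map_mul, aeval_X, aeval_X, aeval_X]
      have hwe := w_even k r hr ((i : ℕ) + 1) (by omega) (by omega) (by omega)
      have hz := w_zero k r hr (by omega)
      have hwo := w_odd k r hr (i : ℕ) (by omega) hodd
      rw [hwe, hz, hwo]
      have hval : (⟨(i : ℕ) + 1 - 1, by omega⟩ : Fin (2 * r)) =
          (⟨(i : ℕ), by omega⟩ : Fin (2 * r)) := rfl
      rw [hval]
      show _ = algebraMap (MvPolynomial (Fin (2 * r)) k) (Localization.Away (p k r hr))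
        (X (⟨(i : ℕ) + 1, by omega⟩ : Fin (2 * r)))
      ring
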